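/- arXiv:2411.10807 — 8 statements merged into one kernel-verified Lean document; each statement's English description precedes it below -/
import Mathlib

section
/- Let n ≥ 1, let J : ℝ⁴ → Mₙ(ℂ) (coordinates denoted (z, z̃, w, w̃)) be continuously differentiable with J(p) invertible for every p and with the matrix functions (∂_w J)J⁻¹ and (∂_z J)J⁻¹ continuously differentiable, and let K : ℝ⁴ → Mₙ(ℂ) be twice continuously differentiable. Suppose (J, K) satisfy the Miura transformation ∂_{z̃}K = −(∂_w J)J⁻¹ and ∂_{w̃}K = −(∂_z J)J⁻¹. Then J satisfies the self-dual Yang–Mills equation ∂_{z̃}((∂_z J)J⁻¹) − ∂_{w̃}((∂_w J)J⁻¹) = 0. -/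
open Matrix

/-- Partial derivative of a scalar function on `ℝ⁴` with respect to the `μ`-th coordinate. -/
noncomputable def pd (μ : Fin 4) (f : (Fin 4 → ℝ) → ℂ) (p : Fin 4 → ℝ) : ℂ :=
  deriv (fun s => f (Function.update p μ s)) (p μ)

/-- Entrywise partial derivative of a matrix-valued function on `ℝ⁴`. -/
noncomputable def pdM {n : ℕ} (μ : Fin 4) (J : (Fin 4 → ℝ) → Matrix (Fin n) (Fin n) ℂ)
    (p : Fin 4 → ℝ) : Matrix (Fin n) (Fin n) ℂ :=
  Matrix.of fun i j => pd μ (fun q => J q i j) p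

lemma HasFDerivAt.pd_eq {μ : Fin 4} {f : (Fin 4 → ℝ) → ℂ} {f' : (Fin 4 → ℝ) →L[ℝ] ℂ}
    {p : Fin 4 → ℝ} (hf : HasFDerivAt f f' p) : pd μ f p = f' (Pi.single μ 1) := by
  rw [← Function.update_eq_self μ p] at hf
  exact (hf.comp_hasDerivAt (p μ) (hasDerivAt_update p μ (p μ))).deriv

lemma pd_pd_eq_fderiv_fderiv {f : (Fin 4 → ℝ) → ℂ} (hf : ContDiff ℝ 2 f) (μ ν : Fin 4)
    (p : Fin 4 → ℝ) :
    pd μ (pd ν f) p = fderiv ℝ (fderiv ℝ f) p (Pi.single μ 1) (Pi.single ν 1) := by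
  have hf' : Differentiable ℝ (fderiv ℝ f) :=
    (hf.fderiv_right one_add_one_eq_two.le).differentiable one_ne_zero
  have hpd : pd ν f = fun q => fderiv ℝ f q (Pi.single ν 1) :=
    funext fun q => ((hf.differentiable two_ne_zero) q).hasFDerivAt.pd_eq
  rw [hpd]
  exact ((ContinuousLinearMap.apply ℝ ℂ (Pi.single ν 1)).hasFDerivAt.comp p
    (hf' p).hasFDerivAt).pd_eq

lemma pd_comm {f : (Fin 4 → ℝ) → ℂ} (hf : ContDiff ℝ 2 f) (μ ν : Fin 4) (p : Fin 4 → ℝ) :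
    pd μ (pd ν f) p = pd ν (pd μ f) p := by
  rw [pd_pd_eq_fderiv_fderiv hf, pd_pd_eq_fderiv_fderiv hf]
  exact hf.contDiffAt.isSymmSndFDerivAt (by simp) _ _

lemma pdM_neg {n : ℕ} (μ : Fin 4) (F : (Fin 4 → ℝ) → Matrix (Fin n) (Fin n) ℂ)
    (p : Fin 4 → ℝ) : pdM μ (fun q => -F q) p = -pdM μ F p := by
  ext i j
  exact deriv.neg

lemma pdM_comm {n : ℕ} {F : (Fin 4 → ℝ) → Matrix (Fin n) (Fin n) ℂ}
    (hF : ∀ i j, ContDiff ℝ 2 fun p => F p i j) (μ ν : Fin 4) (p : Fin 4 → ℝ) :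
    pdM μ (pdM ν F) p = pdM ν (pdM μ F) p := by
  ext i j
  exact pd_comm (hF i j) μ ν p

theorem sdym_J_from_miura_general {n : ℕ}
    (J K : (Fin 4 → ℝ) → Matrix (Fin n) (Fin n) ℂ)
    (hK : ∀ i j, ContDiff ℝ 2 fun p => K p i j)
    (hMiura1 : ∀ p, pdM 1 K p = -(pdM 2 J p * (J p)⁻¹))
    (hMiura2 : ∀ p, pdM 3 K p = -(pdM 0 J p * (J p)⁻¹)) :
    ∀ p, pdM 1 (fun q => pdM 0 J q * (J q)⁻¹) p
        - pdM 3 (fun q => pdM 2 J q * (J q)⁻¹) p = 0 := by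
  intro p
  have hz : (fun q => pdM 0 J q * (J q)⁻¹) = fun q => -pdM 3 K q :=
    funext fun q => by rw [hMiura2, neg_neg]
  have hw : (fun q => pdM 2 J q * (J q)⁻¹) = fun q => -pdM 1 K q :=
    funext fun q => by rw [hMiura1, neg_neg]
  rw [hz, hw, pdM_neg, pdM_neg, pdM_comm hK 1 3, sub_self]

/-- coordinates (z, z̃, w, w̃) = (0, 1, 2, 3).  If `(J, K)` satisfy the Miura
transformation `∂_z̃ K = −(∂_w J)J⁻¹`, `∂_w̃ K = −(∂_z J)J⁻¹`, then `J` satisfies the SDYM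
equation `∂_z̃((∂_z J)J⁻¹) − ∂_w̃((∂_w J)J⁻¹) = 0`. -/
theorem sdym_J_from_miura {n : ℕ} (hn : 1 ≤ n)
    (J K : (Fin 4 → ℝ) → Matrix (Fin n) (Fin n) ℂ)
    (hJ : ∀ i j, ContDiff ℝ 1 fun p => J p i j)
    (hJunit : ∀ p, IsUnit (J p))
    (hzJ : ∀ i j, ContDiff ℝ 1 fun p => (pdM 0 J p * (J p)⁻¹) i j)
    (hwJ : ∀ i j, ContDiff ℝ 1 fun p => (pdM 2 J p * (J p)⁻¹) i j)
    (hK : ∀ i j, ContDiff ℝ 2 fun p => K p i j)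
    (hMiura1 : ∀ p, pdM 1 K p = -(pdM 2 J p * (J p)⁻¹))
    (hMiura2 : ∀ p, pdM 3 K p = -(pdM 0 J p * (J p)⁻¹)) :
    ∀ p, pdM 1 (fun q => pdM 0 J q * (J q)⁻¹) p
        - pdM 3 (fun q => pdM 2 J q * (J q)⁻¹) p = 0 :=
  sdym_J_from_miura_general J K hK hMiura1 hMiura2
end

section
/- Let J, K : ℝ² → M₂(ℂ) (coordinates denoted (z, z̃)) be smooth, with det J(z, z̃) = 1 for all (z, z̃) and with the (2,2)-entry J₂₂ nowhere zero, and suppose they satisfy the reduced Miura system ∂_z J = −[K, σ₃]J and ∂_{z̃}K = −[J, σ₃]J⁻¹. Define u = K₂₁ and v = i·J₁₂/J₂₂. Then (u, v) solves the pKN(−1) system in the rescaled coordinates (x, t) = (2z̃, 2z); equivalently, ∂_z∂_{z̃}u − 4u − 4i·u·v·∂_{z̃}u = 0 and ∂_z∂_{z̃}v − 4v + 4i·v·u·∂_{z̃}v = 0. -/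
open Matrix

/-- Partial derivative with respect to the first coordinate `z`. -/
noncomputable def pdz (f : ℝ × ℝ → ℂ) (p : ℝ × ℝ) : ℂ :=
  deriv (fun s => f (s, p.2)) p.1

/-- Partial derivative with respect to the second coordinate `z̃`. -/
noncomputable def pdzt (f : ℝ × ℝ → ℂ) (p : ℝ × ℝ) : ℂ :=
  deriv (fun s => f (p.1, s)) p.2

/-- Entrywise `∂_z` of a matrix-valued function. -/
noncomputable def pdzM (J : ℝ × ℝ → Matrix (Fin 2) (Fin 2) ℂ) (p : ℝ × ℝ) :
    Matrix (Fin 2) (Fin 2) ℂ :=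
  Matrix.of fun i j => pdz (fun q => J q i j) p

/-- Entrywise `∂_z̃` of a matrix-valued function. -/
noncomputable def pdztM (J : ℝ × ℝ → Matrix (Fin 2) (Fin 2) ℂ) (p : ℝ × ℝ) :
    Matrix (Fin 2) (Fin 2) ℂ :=
  Matrix.of fun i j => pdzt (fun q => J q i j) p

/-- The third Pauli matrix `σ₃ = diag(1, −1)`. -/
def sigma3 : Matrix (Fin 2) (Fin 2) ℂ := !![1, 0; 0, -1]

lemma hasDerivAt_line1 {f : ℝ × ℝ → ℂ} {p : ℝ × ℝ} (hf : DifferentiableAt ℝ f p) :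
    HasDerivAt (fun s => f (s, p.2)) (fderiv ℝ f p ((1:ℝ),(0:ℝ))) p.1 := by
  have h1 : HasDerivAt (fun s : ℝ => (s, p.2)) ((1:ℝ),(0:ℝ)) p.1 :=
    HasDerivAt.prodMk (hasDerivAt_id _) (hasDerivAt_const _ _)
  exact (hf.hasFDerivAt.comp_hasDerivAt p.1 h1)

lemma hasDerivAt_line2 {f : ℝ × ℝ → ℂ} {p : ℝ × ℝ} (hf : DifferentiableAt ℝ f p) :
    HasDerivAt (fun s => f (p.1, s)) (fderiv ℝ f p ((0:ℝ),(1:ℝ))) p.2 := by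
  have h1 : HasDerivAt (fun s : ℝ => (p.1, s)) ((0:ℝ),(1:ℝ)) p.2 :=
    HasDerivAt.prodMk (hasDerivAt_const _ _) (hasDerivAt_id _)
  exact (hf.hasFDerivAt.comp_hasDerivAt p.2 h1)

lemma pdz_eq {f : ℝ × ℝ → ℂ} {p : ℝ × ℝ} (hf : DifferentiableAt ℝ f p) :
    pdz f p = fderiv ℝ f p ((1:ℝ),(0:ℝ)) := (hasDerivAt_line1 hf).deriv

lemma pdzt_eq {f : ℝ × ℝ → ℂ} {p : ℝ × ℝ} (hf : DifferentiableAt ℝ f p) :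
    pdzt f p = fderiv ℝ f p ((0:ℝ),(1:ℝ)) := (hasDerivAt_line2 hf).deriv

lemma clairaut {f : ℝ × ℝ → ℂ} (hf : ContDiff ℝ (⊤ : ℕ∞) f) (p : ℝ × ℝ) :
    pdz (fun q => pdzt f q) p = pdzt (fun q => pdz f q) p := by
  have hdiff : Differentiable ℝ f := hf.differentiable (by simp)
  have hfd : ContDiff ℝ (⊤ : ℕ∞) (fderiv ℝ f) := hf.fderiv_right (by simp)
  have e1 : (fun q => pdzt f q) = fun q => fderiv ℝ f q ((0:ℝ),(1:ℝ)) :=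
    funext fun q => pdzt_eq (hdiff q)
  have e2 : (fun q => pdz f q) = fun q => fderiv ℝ f q ((1:ℝ),(0:ℝ)) :=
    funext fun q => pdz_eq (hdiff q)
  have key : ∀ v w : ℝ × ℝ, fderiv ℝ (fun q => fderiv ℝ f q w) p v
      = fderiv ℝ (fderiv ℝ f) p v w := by
    intro v w
    have h : HasFDerivAt (fun q => fderiv ℝ f q w)
        (((ContinuousLinearMap.apply ℝ ℂ w)).comp (fderiv ℝ (fderiv ℝ f) p)) p :=
      ((ContinuousLinearMap.apply ℝ ℂ w).hasFDerivAt.comp p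
        ((hfd.differentiable (by simp) p).hasFDerivAt))
    rw [h.fderiv]; rfl
  have hc : ∀ w : ℝ × ℝ, ContDiff ℝ (⊤ : ℕ∞) (fun q => fderiv ℝ f q w) := fun w =>
    hfd.clm_apply contDiff_const
  have hsymm : IsSymmSndFDerivAt ℝ f p := hf.contDiffAt.isSymmSndFDerivAt (by
    exact (by rw [minSmoothness_of_isRCLikeNormedField]; exact WithTop.coe_le_coe.mpr le_top))
  rw [e1, e2, pdz_eq ((hc _).differentiable (by simp) p),
    pdzt_eq ((hc _).differentiable (by simp) p), key, key, hsymm]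

/-- from the reduced Miura system `∂_z J = −[K,σ₃]J`, `∂_z̃ K = −[J,σ₃]J⁻¹`
with `det J = 1` and `J₂₂ ≠ 0`, the pair `u = K₂₁`, `v = i·J₁₂/J₂₂` solves the pKN(−1)
system in rescaled coordinates `(x,t) = (2z̃, 2z)`; equivalently
`∂_z∂_z̃ u − 4u − 4i·u·v·∂_z̃ u = 0` and `∂_z∂_z̃ v − 4v + 4i·v·u·∂_z̃ v = 0`. -/
theorem pKN_from_reduced_miura
    (J K : ℝ × ℝ → Matrix (Fin 2) (Fin 2) ℂ)
    (hJ : ∀ i j, ContDiff ℝ (⊤ : ℕ∞) fun p => J p i j)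
    (hK : ∀ i j, ContDiff ℝ (⊤ : ℕ∞) fun p => K p i j)
    (hdet : ∀ p, (J p).det = 1)
    (hJ22 : ∀ p, J p 1 1 ≠ 0)
    (hMiura1 : ∀ p, pdzM J p = -((K p * sigma3 - sigma3 * K p) * J p))
    (hMiura2 : ∀ p, pdztM K p = -((J p * sigma3 - sigma3 * J p) * (J p)⁻¹))
    (u v : ℝ × ℝ → ℂ)
    (hu : u = fun p => K p 1 0)
    (hv : v = fun p => Complex.I * J p 0 1 / J p 1 1) :
    ∀ p, pdz (fun q => pdzt u q) p - 4 * u p - 4 * Complex.I * u p * v p * pdzt u p = 0 ∧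
         pdz (fun q => pdzt v q) p - 4 * v p + 4 * Complex.I * v p * u p * pdzt v p = 0 := by
  subst hu hv
  have hdJ : ∀ i j, Differentiable ℝ (fun p => J p i j) := fun i j => (hJ i j).differentiable (by simp)
  have hdK : ∀ i j, Differentiable ℝ (fun p => K p i j) := fun i j => (hK i j).differentiable (by simp)
  have hdet' : ∀ q, J q 0 0 * J q 1 1 - J q 0 1 * J q 1 0 = 1 := fun q => by
    have := hdet q; rwa [Matrix.det_fin_two] at this
  -- entrywise Miura 1
  have hm1 : ∀ q i j, pdz (fun r => J r i j) q = (-((K q * sigma3 - sigma3 * K q) * J q)) i j := by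
    intro q i j
    have h : pdzM J q i j = (-((K q * sigma3 - sigma3 * K q) * J q)) i j := by rw [hMiura1 q]
    simpa [pdzM] using h
  have hzb : ∀ q, pdz (fun r => J r 0 1) q = 2 * K q 0 1 * J q 1 1 := by
    intro q
    rw [hm1 q 0 1]
    simp only [sigma3, Matrix.neg_apply, Matrix.sub_apply, Matrix.mul_apply, Fin.sum_univ_two,
      Matrix.of_apply, Matrix.cons_val', Matrix.cons_val_zero, Matrix.cons_val_one,
      Matrix.head_cons, Matrix.empty_val', Matrix.cons_val_fin_one, Matrix.head_fin_const]
    ring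
  have hzc : ∀ q, pdz (fun r => J r 1 0) q = -2 * K q 1 0 * J q 0 0 := by
    intro q
    rw [hm1 q 1 0]
    simp only [sigma3, Matrix.neg_apply, Matrix.sub_apply, Matrix.mul_apply, Fin.sum_univ_two,
      Matrix.of_apply, Matrix.cons_val', Matrix.cons_val_zero, Matrix.cons_val_one,
      Matrix.head_cons, Matrix.empty_val', Matrix.cons_val_fin_one, Matrix.head_fin_const]
    ring
  have hzd : ∀ q, pdz (fun r => J r 1 1) q = -2 * K q 1 0 * J q 0 1 := by
    intro q
    rw [hm1 q 1 1]
    simp only [sigma3, Matrix.neg_apply, Matrix.sub_apply, Matrix.mul_apply, Fin.sum_univ_two,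
      Matrix.of_apply, Matrix.cons_val', Matrix.cons_val_zero, Matrix.cons_val_one,
      Matrix.head_cons, Matrix.empty_val', Matrix.cons_val_fin_one, Matrix.head_fin_const]
    ring
  -- inverse of J
  have hinv : ∀ q, (J q)⁻¹ = !![J q 1 1, -(J q 0 1); -(J q 1 0), J q 0 0] := by
    intro q
    rw [Matrix.inv_def, Matrix.adjugate_fin_two, hdet q]
    simp
  -- entrywise Miura 2
  have hm2 : ∀ q i j, pdzt (fun r => K r i j) q
      = (-((J q * sigma3 - sigma3 * J q) * (J q)⁻¹)) i j := by
    intro q i j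
    have h : pdztM K q i j = (-((J q * sigma3 - sigma3 * J q) * (J q)⁻¹)) i j := by rw [hMiura2 q]
    simpa [pdztM] using h
  have hztk12 : ∀ q, pdzt (fun r => K r 0 1) q = 2 * J q 0 0 * J q 0 1 := by
    intro q
    rw [hm2 q 0 1, hinv q]
    simp only [sigma3, Matrix.neg_apply, Matrix.sub_apply, Matrix.mul_apply, Fin.sum_univ_two,
      Matrix.of_apply, Matrix.cons_val', Matrix.cons_val_zero, Matrix.cons_val_one,
      Matrix.head_cons, Matrix.empty_val', Matrix.cons_val_fin_one, Matrix.head_fin_const]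
    ring
  have hztk21 : ∀ q, pdzt (fun r => K r 1 0) q = -2 * J q 1 0 * J q 1 1 := by
    intro q
    rw [hm2 q 1 0, hinv q]
    simp only [sigma3, Matrix.neg_apply, Matrix.sub_apply, Matrix.mul_apply, Fin.sum_univ_two,
      Matrix.of_apply, Matrix.cons_val', Matrix.cons_val_zero, Matrix.cons_val_one,
      Matrix.head_cons, Matrix.empty_val', Matrix.cons_val_fin_one, Matrix.head_fin_const]
    ring
  -- smoothness of v
  have hvsm : ContDiff ℝ (⊤ : ℕ∞) (fun p => Complex.I * J p 0 1 / J p 1 1) := by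
    simp only [div_eq_mul_inv]
    exact (contDiff_const.mul (hJ 0 1)).mul ((hJ 1 1).inv hJ22)
  have hvd : Differentiable ℝ (fun p => Complex.I * J p 0 1 / J p 1 1) :=
    hvsm.differentiable (by simp)
  intro p
  -- line derivatives at p
  have lineJz : ∀ i j, HasDerivAt (fun s => J (s, p.2) i j) (pdz (fun r => J r i j) p) p.1 :=
    fun i j => (pdz_eq (hdJ i j p)) ▸ hasDerivAt_line1 (hdJ i j p)
  have lineKzt : ∀ i j, HasDerivAt (fun s => K (p.1, s) i j) (pdzt (fun r => K r i j) p) p.2 :=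
    fun i j => (pdzt_eq (hdK i j p)) ▸ hasDerivAt_line2 (hdK i j p)
  constructor
  · -- u equation
    have e : (fun q => pdzt (fun r => K r 1 0) q) = fun q => -2 * J q 1 0 * J q 1 1 :=
      funext hztk21
    rw [e]
    have H : HasDerivAt (fun s => -2 * J (s, p.2) 1 0 * J (s, p.2) 1 1)
        ((-2 * pdz (fun r => J r 1 0) p) * J p 1 1
          + (-2 * J p 1 0) * pdz (fun r => J r 1 1) p) p.1 := by
      simpa [mul_comm, mul_assoc, Pi.mul_def] using ((lineJz 1 0).const_mul (-2 : ℂ)).mul (lineJz 1 1)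
    have hval : pdz (fun q => -2 * J q 1 0 * J q 1 1) p
        = (-2 * pdz (fun r => J r 1 0) p) * J p 1 1
          + (-2 * J p 1 0) * pdz (fun r => J r 1 1) p := H.deriv
    rw [hval, hzc p, hzd p, hztk21 p]
    have hd := hJ22 p
    field_simp
    linear_combination (4 * K p 1 0) * hdet' p
      + (8 * K p 1 0 * J p 0 1 * J p 1 0) * Complex.I_sq
  · -- v equation
    have hcl := clairaut hvsm p
    rw [hcl]
    have hpzv : ∀ q, pdz (fun r => Complex.I * J r 0 1 / J r 1 1) q
        = 2 * Complex.I * K q 0 1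
          - 2 * Complex.I * K q 1 0 * (Complex.I * J q 0 1 / J q 1 1) ^ 2 := by
      intro q
      have lb : HasDerivAt (fun s => J (s, q.2) 0 1) (pdz (fun r => J r 0 1) q) q.1 :=
        (pdz_eq (hdJ 0 1 q)) ▸ hasDerivAt_line1 (hdJ 0 1 q)
      have ld : HasDerivAt (fun s => J (s, q.2) 1 1) (pdz (fun r => J r 1 1) q) q.1 :=
        (pdz_eq (hdJ 1 1 q)) ▸ hasDerivAt_line1 (hdJ 1 1 q)
      have H : HasDerivAt (fun s => Complex.I * J (s, q.2) 0 1 / J (s, q.2) 1 1)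
          (((Complex.I * pdz (fun r => J r 0 1) q) * J q 1 1
            - (Complex.I * J q 0 1) * pdz (fun r => J r 1 1) q) / (J q 1 1) ^ 2) q.1 :=
        (lb.const_mul Complex.I).div ld (hJ22 q)
      have hval : pdz (fun r => Complex.I * J r 0 1 / J r 1 1) q
          = ((Complex.I * pdz (fun r => J r 0 1) q) * J q 1 1
            - (Complex.I * J q 0 1) * pdz (fun r => J r 1 1) q) / (J q 1 1) ^ 2 := H.deriv
      rw [hval, hzb q, hzd q]
      have hd := hJ22 q
      field_simp
      linear_combination (J q 0 1 ^ 2 * K q 1 0) * Complex.I_sq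
    have e2 : (fun q => pdz (fun r => Complex.I * J r 0 1 / J r 1 1) q)
        = fun q => 2 * Complex.I * K q 0 1
            - 2 * Complex.I * K q 1 0 * (Complex.I * J q 0 1 / J q 1 1) ^ 2 :=
      funext hpzv
    rw [e2]
    have lv : HasDerivAt (fun s => Complex.I * J (p.1, s) 0 1 / J (p.1, s) 1 1)
        (pdzt (fun r => Complex.I * J r 0 1 / J r 1 1) p) p.2 :=
      (pdzt_eq (hvd p)) ▸ hasDerivAt_line2 (hvd p)
    have H : HasDerivAt (fun s => 2 * Complex.I * K (p.1, s) 0 1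
        - 2 * Complex.I * K (p.1, s) 1 0 * (Complex.I * J (p.1, s) 0 1 / J (p.1, s) 1 1) ^ 2)
        ((2 * Complex.I * pdzt (fun r => K r 0 1) p)
          - ((2 * Complex.I * pdzt (fun r => K r 1 0) p)
              * (Complex.I * J p 0 1 / J p 1 1) ^ 2
            + (2 * Complex.I * K p 1 0)
              * (2 * (Complex.I * J p 0 1 / J p 1 1)
                  * pdzt (fun r => Complex.I * J r 0 1 / J r 1 1) p))) p.2 := by
      have h1 := (lineKzt 0 1).const_mul (2 * Complex.I)
      have h2 := (lineKzt 1 0).const_mul (2 * Complex.I)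
      have h3 : HasDerivAt (fun s => (Complex.I * J (p.1, s) 0 1 / J (p.1, s) 1 1) ^ 2)
          (2 * (Complex.I * J p 0 1 / J p 1 1)
            * pdzt (fun r => Complex.I * J r 0 1 / J r 1 1) p) p.2 := by
        simp only [pow_two]
        convert (lv.mul lv : HasDerivAt (fun s => (Complex.I * J (p.1, s) 0 1 / J (p.1, s) 1 1)
          * (Complex.I * J (p.1, s) 0 1 / J (p.1, s) 1 1)) _ p.2) using 1
        · rfl
        · rfl
        · simp only [Prod.mk.eta]
          ring
      exact h1.sub (h2.mul h3)
    have hval : pdzt (fun q => 2 * Complex.I * K q 0 1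
        - 2 * Complex.I * K q 1 0 * (Complex.I * J q 0 1 / J q 1 1) ^ 2) p
        = (2 * Complex.I * pdzt (fun r => K r 0 1) p)
          - ((2 * Complex.I * pdzt (fun r => K r 1 0) p)
              * (Complex.I * J p 0 1 / J p 1 1) ^ 2
            + (2 * Complex.I * K p 1 0)
              * (2 * (Complex.I * J p 0 1 / J p 1 1)
                  * pdzt (fun r => Complex.I * J r 0 1 / J r 1 1) p)) := H.deriv
    have hsq : (Complex.I * J p 0 1 / J p 1 1) ^ 2 = -(J p 0 1 ^ 2 / J p 1 1 ^ 2) := by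
      rw [div_pow, mul_pow, Complex.I_sq]; ring
    rw [hval, hztk12 p, hztk21 p, hsq]
    have hd := hJ22 p
    set V := pdzt (fun r => Complex.I * J r 0 1 / J r 1 1) p with hV
    field_simp
    linear_combination (4 * Complex.I * J p 0 1) * hdet' p
end

section
/- Let J, K : ℝ² → M₂(ℂ) (coordinates denoted (z, z̃)) with J continuously differentiable in z, the (2,2)-entry J₂₂ nowhere zero, and suppose ∂_z J = −[K, σ₃]J. Define u = K₂₁ and v = i·J₁₂/J₂₂. Then ∂_z v = 2i·K₁₂ − 2i·v²·u; that is, in the rescaled coordinates (x, t) = (2z̃, 2z) the Riccati-type Miura relation v_t = i·K₁₂ − i·v²·u holds. -/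
/-!
The second column `(a, b) = (J₁₂, J₂₂)` of `J` solves the linear system `a' = 2K₁₂ b`,
`b' = −2K₂₁ a`, because `[K, σ₃]` is off-diagonal. The projective coordinate `v = i a / b`
of a solution of a linear `2 × 2` system satisfies a Riccati equation, by the quotient rule.
-/

open Matrix

open Complex

theorem sigma3_commutator (K : Matrix (Fin 2) (Fin 2) ℂ) :
    K * sigma3 - sigma3 * K = !![0, -2 * K 0 1; 2 * K 1 0, 0] := by
  rw [eta_fin_two K]
  simp only [sigma3, mul_fin_two]
  ext i j
  fin_cases i <;> fin_cases j <;> simp <;> ring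

theorem neg_sigma3_commutator_mul_apply_zero_one (K J : Matrix (Fin 2) (Fin 2) ℂ) :
    (-((K * sigma3 - sigma3 * K) * J)) 0 1 = 2 * K 0 1 * J 1 1 := by
  rw [sigma3_commutator, neg_apply, mul_apply, Fin.sum_univ_two]
  simp

theorem neg_sigma3_commutator_mul_apply_one_one (K J : Matrix (Fin 2) (Fin 2) ℂ) :
    (-((K * sigma3 - sigma3 * K) * J)) 1 1 = -(2 * K 1 0 * J 0 1) := by
  rw [sigma3_commutator, neg_apply, mul_apply, Fin.sum_univ_two]
  simp

theorem hasDerivAt_riccati_of_linear {a b : ℝ → ℂ} {k u : ℂ} {x : ℝ}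
    (ha : HasDerivAt a (2 * k * b x) x) (hb : HasDerivAt b (-(2 * u * a x)) x)
    (hb0 : b x ≠ 0) :
    HasDerivAt (fun s => I * a s / b s) (2 * I * k - 2 * I * (I * a x / b x) ^ 2 * u) x := by
  refine ((ha.const_mul I).div hb hb0).congr_deriv ?_
  field_simp
  linear_combination (a x ^ 2 * u) * I_sq

theorem pdzM_apply (J : ℝ × ℝ → Matrix (Fin 2) (Fin 2) ℂ) (p : ℝ × ℝ) (i j : Fin 2) :
    pdzM J p i j = pdz (fun q => J q i j) p :=
  rfl

/-- if `J` is continuously differentiable in `z`, `J₂₂` is nowhere zero, and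
`∂_z J = −[K,σ₃]J`, then `u = K₂₁`, `v = i·J₁₂/J₂₂` satisfy the Riccati-type Miura relation
`∂_z v = 2i·K₁₂ − 2i·v²·u`. -/
theorem riccati_miura_relation
    (J K : ℝ × ℝ → Matrix (Fin 2) (Fin 2) ℂ)
    (hJz : ∀ (zt : ℝ) (i j : Fin 2), ContDiff ℝ 1 fun z : ℝ => J (z, zt) i j)
    (hJ22 : ∀ p, J p 1 1 ≠ 0)
    (hMiura : ∀ p, pdzM J p = -((K p * sigma3 - sigma3 * K p) * J p))
    (u v : ℝ × ℝ → ℂ)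
    (hu : u = fun p => K p 1 0)
    (hv : v = fun p => Complex.I * J p 0 1 / J p 1 1) :
    ∀ p, pdz v p = 2 * Complex.I * K p 0 1 - 2 * Complex.I * (v p) ^ 2 * u p := by
  rintro ⟨z, zt⟩
  subst hu hv
  have hasDerivAt_entry (i j : Fin 2) :
      HasDerivAt (fun s => J (s, zt) i j) (pdz (fun q => J q i j) (z, zt)) z :=
    ((hJz zt i j).differentiable one_ne_zero z).hasDerivAt
  have ha := hasDerivAt_entry 0 1
  have hb := hasDerivAt_entry 1 1
  rw [← pdzM_apply, hMiura, neg_sigma3_commutator_mul_apply_zero_one] at ha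
  rw [← pdzM_apply, hMiura, neg_sigma3_commutator_mul_apply_one_one] at hb
  exact (hasDerivAt_riccati_of_linear ha hb (hJ22 _)).deriv
end

section
/- Let N ≥ 1, let k₁, …, k_N ∈ ℂ be pairwise distinct and l₁, …, l_N ∈ ℂ be pairwise distinct with k_i ≠ l_j for all i, j, let G be the Cauchy matrix with entries G_{ij} = 1/(k_i − l_j), and let X, Y be the diagonal matrices with X_i = (∏_{s=1}^N (k_s − l_i)) / (∏_{s ≠ i} (l_s − l_i)) and Y_i = (∏_{s=1}^N (k_i − l_s)) / (∏_{s ≠ i} (k_i − k_s)). Let P, Q be invertible diagonal N×N complex matrices such that Q⁻¹ + Gᵀ·P·G is invertible. Then e_Nᵀ·(Q⁻¹ + Gᵀ·P·G)⁻¹·e_N = e_Nᵀ·(G·X·Q⁻¹ + Y⁻¹·P·G)⁻¹·e_N. -/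
open Matrix Finset Polynomial Lagrange

/-!
Write `K = ∏ (x - kₛ)` and `L = ∏ (x - lₛ)`. The weight `Xₘ` equals `-K(lₘ) · wₘ`, where `wₘ`
is the barycentric weight of the nodes `l`, so the first barycentric form of Lagrange
interpolation at the nodes `l`, evaluated at `z = kᵢ`, computes the sums that enter `G X e` and
`G X Gᵀ`. Interpolating `K - L` (degree `< N`) gives `G X e = e`; interpolating `K / (x - kⱼ)`,
which vanishes at `kᵢ` for `i ≠ j`, gives `G X Gᵀ = Y⁻¹`. Hence
`G X Q⁻¹ + Y⁻¹ P G = G X (Q⁻¹ + Gᵀ P G)`, and the left factor `G X` drops out of `eᵀ (⋯)⁻¹ e`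
because `(G X)⁻¹ e = e`.
-/

theorem Lagrange.eval_eq_eval_nodal_mul_sum_nodalWeight {F ι : Type*} [Field F] [Fintype ι]
    [DecidableEq ι] {v : ι → F} (hv : Function.Injective v) {p : F[X]}
    (hp : p.degree < Fintype.card ι) {x : F} (hx : ∀ i, x ≠ v i) :
    p.eval x = (nodal univ v).eval x * ∑ i, nodalWeight univ v i * (x - v i)⁻¹ * p.eval (v i) := by
  conv_lhs => rw [eq_interpolate hv.injOn hp]
  exact eval_interpolate_not_at_node _ fun i _ => hx i

section CauchyMatrix

variable {F ι : Type*} [Field F] [Fintype ι] [DecidableEq ι] {k l : ι → F}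

def cauchyMatrix (k l : ι → F) : Matrix ι ι F := of fun i j => 1 / (k i - l j)

def cauchyColWeight (k l : ι → F) (j : ι) : F :=
  (∏ s, (k s - l j)) / ∏ s ∈ univ.erase j, (l s - l j)

def cauchyRowWeight (k l : ι → F) (i : ι) : F :=
  (∏ s, (k i - l s)) / ∏ s ∈ univ.erase i, (k i - k s)

theorem cauchyColWeight_eq_neg_eval_nodal_mul_nodalWeight (j : ι) :
    cauchyColWeight k l j = -((nodal univ k).eval (l j) * nodalWeight univ l j) := by
  have hquot : ∀ s, (k s - l j) / (l s - l j) = (l j - k s) / (l j - l s) := fun s => by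
    rw [← neg_sub, ← neg_sub (l j), neg_div_neg_eq]
  rw [cauchyColWeight, eval_nodal, nodalWeight, prod_inv_distrib,
    ← mul_prod_erase univ _ (mem_univ j), ← mul_prod_erase univ (fun s => l j - k s) (mem_univ j),
    mul_div_assoc, ← prod_div_distrib, mul_assoc, ← div_eq_mul_inv, ← prod_div_distrib]
  simp only [hquot]
  ring

theorem sum_cauchyColWeight_div (hl : Function.Injective l) (hkl : ∀ i j, k i ≠ l j) (i : ι) :
    ∑ j, cauchyColWeight k l j / (k i - l j) = 1 := by
  have hdeg : (nodal univ k - nodal univ l).degree < Fintype.card ι := by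
    have hK : (nodal univ k).Monic := nodal_monic
    have hL : (nodal univ l).Monic := nodal_monic
    simpa [degree_nodal] using degree_sub_lt_left (degree_nodal.trans degree_nodal.symm)
      hK.ne_zero (hK.leadingCoeff.trans hL.leadingCoeff.symm)
  have key := eval_eq_eval_nodal_mul_sum_nodalWeight hl hdeg (hkl i)
  simp only [eval_sub, eval_nodal_at_node (mem_univ _), sub_zero, zero_sub] at key
  have hsum : ∑ j, nodalWeight univ l j * (k i - l j)⁻¹ * (nodal univ k).eval (l j) = -1 :=
    mul_left_cancel₀ (eval_nodal_not_at_node fun j _ => hkl i j)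
      (key.symm.trans (mul_neg_one _).symm)
  rw [← neg_neg (1 : F), ← hsum, ← sum_neg_distrib]
  refine sum_congr rfl fun j _ => ?_
  rw [cauchyColWeight_eq_neg_eval_nodal_mul_nodalWeight]
  ring

theorem sum_cauchyColWeight_div_mul_div (hl : Function.Injective l) (hkl : ∀ i j, k i ≠ l j)
    (i j : ι) :
    ∑ m, cauchyColWeight k l m / ((k i - l m) * (k j - l m)) =
      (∏ s ∈ univ.erase j, (k i - k s)) / ∏ s, (k i - l s) := by
  have hdeg : (nodal (univ.erase j) k).degree < Fintype.card ι := by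
    rw [degree_nodal, card_erase_of_mem (mem_univ j), card_univ]
    exact_mod_cast Nat.sub_lt (Fintype.card_pos_iff.mpr ⟨j⟩) one_pos
  have key := eval_eq_eval_nodal_mul_sum_nodalWeight hl hdeg (hkl i)
  rw [← eval_nodal, ← eval_nodal (s := univ), key, mul_div_cancel_left₀ _
    (eval_nodal_not_at_node fun m _ => hkl i m)]
  refine sum_congr rfl fun m _ => ?_
  have hi := sub_ne_zero.mpr (hkl i m)
  have hj := sub_ne_zero.mpr (hkl j m)
  rw [cauchyColWeight_eq_neg_eval_nodal_mul_nodalWeight, nodal_eq_mul_nodal_erase (mem_univ j),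
    eval_mul, eval_sub, eval_X, eval_C]
  field_simp
  ring

theorem cauchyMatrix_mul_diagonal_mulVec_one (hl : Function.Injective l)
    (hkl : ∀ i j, k i ≠ l j) : (cauchyMatrix k l * diagonal (cauchyColWeight k l)) *ᵥ 1 = 1 := by
  funext i
  rw [Pi.one_apply, ← sum_cauchyColWeight_div hl hkl i]
  simp only [mulVec, dotProduct, mul_diagonal, cauchyMatrix, of_apply, Pi.one_apply, mul_one,
    one_div_mul_eq_div]

theorem cauchyMatrix_mul_diagonal_mul_transpose (hl : Function.Injective l)
    (hkl : ∀ i j, k i ≠ l j) :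
    cauchyMatrix k l * diagonal (cauchyColWeight k l) * (cauchyMatrix k l)ᵀ =
      diagonal (cauchyRowWeight k l)⁻¹ := by
  ext i j
  have hentry : (cauchyMatrix k l * diagonal (cauchyColWeight k l) * (cauchyMatrix k l)ᵀ) i j =
      ∑ m, cauchyColWeight k l m / ((k i - l m) * (k j - l m)) := by
    rw [mul_apply]
    simp only [mul_diagonal, transpose_apply, cauchyMatrix, of_apply]
    exact sum_congr rfl fun m _ => by simp only [div_eq_mul_inv, mul_inv]; ring
  rw [hentry, sum_cauchyColWeight_div_mul_div hl hkl, diagonal_apply]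
  split_ifs with hij
  · rw [hij, Pi.inv_apply, cauchyRowWeight, inv_div]
  · rw [prod_eq_zero (mem_erase.mpr ⟨hij, mem_univ i⟩) (sub_self _), zero_div]

theorem cauchyRowWeight_ne_zero (hk : Function.Injective k) (hkl : ∀ i j, k i ≠ l j) (i : ι) :
    cauchyRowWeight k l i ≠ 0 :=
  div_ne_zero (prod_ne_zero_iff.mpr fun _ _ => sub_ne_zero.mpr (hkl i _))
    (prod_ne_zero_iff.mpr fun _ hs => sub_ne_zero.mpr (hk.ne (ne_of_mem_erase hs).symm))

theorem cauchyMatrix_mul_diagonal_mul_transpose_mul_diagonal (hk : Function.Injective k)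
    (hl : Function.Injective l) (hkl : ∀ i j, k i ≠ l j) :
    cauchyMatrix k l * diagonal (cauchyColWeight k l) * (cauchyMatrix k l)ᵀ *
      diagonal (cauchyRowWeight k l) = 1 := by
  rw [cauchyMatrix_mul_diagonal_mul_transpose hl hkl, diagonal_mul_diagonal, ← diagonal_one]
  exact congrArg diagonal (funext fun i => inv_mul_cancel₀ (cauchyRowWeight_ne_zero hk hkl i))

end CauchyMatrix

theorem Matrix.mul_inv_mulVec_of_mulVec_eq_self {n α : Type*} [Fintype n] [DecidableEq n]
    [CommRing α] {A B : Matrix n n α} {v : n → α} (hA : IsUnit A.det) (hv : A *ᵥ v = v) :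
    (A * B)⁻¹ *ᵥ v = B⁻¹ *ᵥ v := by
  let := A.invertibleOfIsUnitDet hA
  rw [mul_inv_rev, ← mulVec_mulVec, inv_mulVec_eq_vec hv.symm]

theorem cauchy_scalar_equivalence_general (N : ℕ)
    (k l : Fin N → ℂ)
    (hk : Function.Injective k) (hl : Function.Injective l)
    (hkl : ∀ i j, k i ≠ l j)
    (G X Y : Matrix (Fin N) (Fin N) ℂ)
    (hG : G = Matrix.of fun i j => 1 / (k i - l j))
    (hX : X = Matrix.diagonal fun i =>
      (∏ s, (k s - l i)) / ∏ s ∈ Finset.univ.erase i, (l s - l i))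
    (hY : Y = Matrix.diagonal fun i =>
      (∏ s, (k i - l s)) / ∏ s ∈ Finset.univ.erase i, (k i - k s))
    (P Q : Matrix (Fin N) (Fin N) ℂ)
    (eN : Fin N → ℂ) (heN : eN = fun _ => 1) :
    eN ⬝ᵥ ((Q⁻¹ + Gᵀ * P * G)⁻¹ *ᵥ eN) =
      eN ⬝ᵥ ((G * X * Q⁻¹ + Y⁻¹ * P * G)⁻¹ *ᵥ eN) := by
  have hGX : (G * X) *ᵥ eN = eN := by
    rw [hG, hX, heN]
    exact cauchyMatrix_mul_diagonal_mulVec_one hl hkl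
  have hGXGY : G * X * Gᵀ * Y = 1 := by
    rw [hG, hX, hY]
    exact cauchyMatrix_mul_diagonal_mul_transpose_mul_diagonal hk hl hkl
  have hdet : IsUnit (G * X).det :=
    isUnit_det_of_right_inverse (B := Gᵀ * Y) (by rw [← Matrix.mul_assoc]; exact hGXGY)
  have hfactor : G * X * Q⁻¹ + Y⁻¹ * P * G = G * X * (Q⁻¹ + Gᵀ * P * G) := by
    rw [inv_eq_left_inv hGXGY, Matrix.mul_add]
    simp only [Matrix.mul_assoc]
  rw [hfactor, mul_inv_mulVec_of_mulVec_eq_self hdet hGX]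

/-- scalar identity connecting the AKNS-type and KP-type expressions:
`e_Nᵀ·(Q⁻¹ + Gᵀ·P·G)⁻¹·e_N = e_Nᵀ·(G·X·Q⁻¹ + Y⁻¹·P·G)⁻¹·e_N`. -/
theorem cauchy_scalar_equivalence (N : ℕ) (hN : 1 ≤ N)
    (k l : Fin N → ℂ)
    (hk : Function.Injective k) (hl : Function.Injective l)
    (hkl : ∀ i j, k i ≠ l j)
    (G X Y : Matrix (Fin N) (Fin N) ℂ)
    (hG : G = Matrix.of fun i j => 1 / (k i - l j))
    (hX : X = Matrix.diagonal fun i =>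
      (∏ s, (k s - l i)) / ∏ s ∈ Finset.univ.erase i, (l s - l i))
    (hY : Y = Matrix.diagonal fun i =>
      (∏ s, (k i - l s)) / ∏ s ∈ Finset.univ.erase i, (k i - k s))
    (pd qd : Fin N → ℂ) (hp : ∀ i, pd i ≠ 0) (hq : ∀ i, qd i ≠ 0)
    (P Q : Matrix (Fin N) (Fin N) ℂ)
    (hP : P = Matrix.diagonal pd) (hQ : Q = Matrix.diagonal qd)
    (hInv : IsUnit (Q⁻¹ + Gᵀ * P * G))
    (eN : Fin N → ℂ) (heN : eN = fun _ => 1) :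
    eN ⬝ᵥ ((Q⁻¹ + Gᵀ * P * G)⁻¹ *ᵥ eN) =
      eN ⬝ᵥ ((G * X * Q⁻¹ + Y⁻¹ * P * G)⁻¹ *ᵥ eN) :=
  cauchy_scalar_equivalence_general N k l hk hl hkl G X Y hG hX hY P Q eN heN
end

section
/- Let N ≥ 1, let K, M be invertible N×N complex matrices and r₁, r₂ ∈ ℂᴺ, and suppose the Sylvester-type relation K·M + M†·K† = r₂·r₂† holds. Define s₁ᵀ = −i·r₁†·K† (a row vector) and the scalars u = r₂†·M⁻¹·r₁, d = 1 − r₂†·M⁻¹·K⁻¹·r₂. Then conj(u)·d = −r₁†·K†·M⁻¹·K⁻¹·r₂; consequently, if d ≠ 0 then the scalar v = (−i·s₁ᵀ·M⁻¹·K⁻¹·r₂)/d satisfies v = conj(u). -/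
open Matrix

lemma vecMulVec_mulVec' {N : ℕ} (w v x : Fin N → ℂ) :
    Matrix.vecMulVec w v *ᵥ x = (v ⬝ᵥ x) • w := by
  ext i
  simp [Matrix.vecMulVec, Matrix.mulVec, dotProduct, Finset.mul_sum, mul_assoc, mul_comm,
    mul_left_comm]

/-- conjugate reduction identity of the KP-type scheme.  If
`K·M + M†·K† = r₂·r₂†`, then with `u = r₂†·M⁻¹·r₁` and `d = 1 − r₂†·M⁻¹·K⁻¹·r₂` one has
`conj(u)·d = −r₁†·K†·M⁻¹·K⁻¹·r₂`; hence if `d ≠ 0` then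
`v = (−i·s₁ᵀ·M⁻¹·K⁻¹·r₂)/d` (with `s₁ᵀ = −i·r₁†·K†`) equals `conj(u)`. -/
theorem conjugate_reduction_KP (N : ℕ) (hN : 1 ≤ N)
    (K M : Matrix (Fin N) (Fin N) ℂ)
    (hK : IsUnit K) (hM : IsUnit M)
    (r1 r2 : Fin N → ℂ)
    (hSyl : K * M + Mᴴ * Kᴴ = Matrix.vecMulVec r2 (fun j => starRingEnd ℂ (r2 j)))
    (u d : ℂ) (s1 : Fin N → ℂ)
    (hu : u = (fun i => starRingEnd ℂ (r2 i)) ⬝ᵥ (M⁻¹ *ᵥ r1))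
    (hd : d = 1 - (fun i => starRingEnd ℂ (r2 i)) ⬝ᵥ ((M⁻¹ * K⁻¹) *ᵥ r2))
    (hs1 : s1 = (-Complex.I) • ((fun i => starRingEnd ℂ (r1 i)) ᵥ* Kᴴ)) :
    starRingEnd ℂ u * d =
      -((fun i => starRingEnd ℂ (r1 i)) ⬝ᵥ ((Kᴴ * M⁻¹ * K⁻¹) *ᵥ r2)) ∧
    (d ≠ 0 →
      (-Complex.I * (s1 ⬝ᵥ ((M⁻¹ * K⁻¹) *ᵥ r2))) / d = starRingEnd ℂ u) := by
  have hKd : IsUnit K.det := (Matrix.isUnit_iff_isUnit_det K).mp hK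
  have hMd : IsUnit M.det := (Matrix.isUnit_iff_isUnit_det M).mp hM
  have hMHd : IsUnit (Mᴴ).det := by
    rw [Matrix.det_conjTranspose]; exact hMd.map (starRingEnd ℂ)
  set c1 : Fin N → ℂ := fun i => starRingEnd ℂ (r1 i) with hc1
  set c2 : Fin N → ℂ := fun i => starRingEnd ℂ (r2 i) with hc2
  have hA : Kᴴ * M⁻¹ * K⁻¹
      = (Mᴴ)⁻¹ * (Matrix.vecMulVec r2 c2 * (M⁻¹ * K⁻¹)) - (Mᴴ)⁻¹ := by
    have h1 : Mᴴ * Kᴴ = Matrix.vecMulVec r2 c2 - K * M := by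
      rw [← hSyl]; abel
    have h2 : Mᴴ * (Kᴴ * M⁻¹ * K⁻¹) = Matrix.vecMulVec r2 c2 * (M⁻¹ * K⁻¹) - 1 := by
      calc Mᴴ * (Kᴴ * M⁻¹ * K⁻¹) = (Mᴴ * Kᴴ) * (M⁻¹ * K⁻¹) := by noncomm_ring
        _ = (Matrix.vecMulVec r2 c2 - K * M) * (M⁻¹ * K⁻¹) := by rw [h1]
        _ = Matrix.vecMulVec r2 c2 * (M⁻¹ * K⁻¹) - K * (M * M⁻¹) * K⁻¹ := by noncomm_ring
        _ = Matrix.vecMulVec r2 c2 * (M⁻¹ * K⁻¹) - 1 := by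
            rw [Matrix.mul_nonsing_inv M hMd, mul_one, Matrix.mul_nonsing_inv K hKd]
    calc Kᴴ * M⁻¹ * K⁻¹ = (Mᴴ)⁻¹ * (Mᴴ * (Kᴴ * M⁻¹ * K⁻¹)) := by
          rw [← mul_assoc, Matrix.nonsing_inv_mul Mᴴ hMHd, one_mul]
      _ = (Mᴴ)⁻¹ * (Matrix.vecMulVec r2 c2 * (M⁻¹ * K⁻¹)) - (Mᴴ)⁻¹ := by
          rw [h2]; noncomm_ring
  have hcu : starRingEnd ℂ u = c1 ⬝ᵥ ((Mᴴ)⁻¹ *ᵥ r2) := by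
    have h3 : starRingEnd ℂ u = star (M⁻¹ *ᵥ r1) ⬝ᵥ r2 := by
      rw [hu]
      have := Matrix.star_dotProduct (M⁻¹ *ᵥ r1) r2
      simpa [hc2, dotProduct, mul_comm] using congrArg star this.symm
    rw [h3, Matrix.star_mulVec, ← Matrix.dotProduct_mulVec,
      Matrix.conjTranspose_nonsing_inv]
    rfl
  have key : c1 ⬝ᵥ ((Kᴴ * M⁻¹ * K⁻¹) *ᵥ r2) = -(starRingEnd ℂ u * d) := by
    rw [hA, Matrix.sub_mulVec, dotProduct_sub,
      ← Matrix.mulVec_mulVec, ← Matrix.mulVec_mulVec, vecMulVec_mulVec',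
      Matrix.mulVec_smul, dotProduct_smul, smul_eq_mul, ← hcu, hd]
    ring
  refine ⟨by rw [key]; ring, fun hdne => ?_⟩
  have hs : s1 ⬝ᵥ ((M⁻¹ * K⁻¹) *ᵥ r2)
      = (-Complex.I) * (c1 ⬝ᵥ ((Kᴴ * M⁻¹ * K⁻¹) *ᵥ r2)) := by
    rw [hs1, smul_dotProduct, smul_eq_mul, ← Matrix.dotProduct_mulVec]
    simp [Matrix.mulVec_mulVec, Matrix.mul_assoc]
  rw [hs, key, ← mul_assoc, neg_mul_neg, Complex.I_mul_I]
  field_simp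
end

section
/- Let N, M ≥ 1 and let k, l ∈ ℂ with k ≠ l. Let K = J^{[N]}[k] be the N×N lower-triangular Jordan block and let L = (J^{[M]}[l])ᵀ. Let G be the N×M matrix with entries g_{ij} = C(i+j−2, i−1)·(−1)^{i−1}/(k−l)^{i+j−1}, where C(n, m) is the binomial coefficient. Then K·G − G·L = e₁⁽ᴺ⁾·(e₁⁽ᴹ⁾)ᵀ. -/
/-!
Write `J^{[N]}[k] = k + S` with `S` the lower shift. Then `K G - G L = (k - l) G + S G - G Sᵀ`,
whose `(a, b)` entry (0-based) is `(k - l) g a b + g (a - 1) b - g a (b - 1)`, the terms with a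
negative index being absent. For `g a b = C(a + b, a) (-1)^a / (k - l)^(a + b + 1)` this is
Pascal's rule `C(a + b + 2, a + 1) = C(a + b + 1, a) + C(a + b + 1, a + 1)` away from the first
row and column, and a direct computation on them.
-/

open Matrix

/-- The `N×N` lower-triangular Jordan block with `k` on the diagonal and `1` on the
first subdiagonal. -/
def jordanBlock (N : ℕ) (k : ℂ) : Matrix (Fin N) (Fin N) ℂ :=
  Matrix.of fun i j =>
    if (i : ℕ) = (j : ℕ) then k else if (i : ℕ) = (j : ℕ) + 1 then 1 else 0

theorem Finset.sum_range_ite_eq_add_one {M : Type*} [AddCommMonoid M] {N i : ℕ} (hi : i < N)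
    (f : ℕ → M) :
    ∑ m ∈ Finset.range N, (if i = m + 1 then f m else 0) = if i = 0 then 0 else f (i - 1) := by
  rcases i with _ | i
  · simp
  · simp [Finset.sum_ite_eq, show i < N by omega]

theorem jordanBlock_mul_of_apply {n : Type*} (N : ℕ) (k : ℂ) (f : ℕ → n → ℂ)
    (i : Fin N) (j : n) :
    (jordanBlock N k * of fun (i : Fin N) j => f i j) i j =
      k * f i j + if (i : ℕ) = 0 then 0 else f (i - 1) j := by
  have split : ∀ m, (if (i : ℕ) = m then k else if (i : ℕ) = m + 1 then 1 else 0) * f m j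
      = (if (i : ℕ) = m then k * f m j else 0) + (if (i : ℕ) = m + 1 then f m j else 0) := by
    intro m
    split_ifs <;> first | omega | ring
  simp only [mul_apply, jordanBlock, of_apply]
  rw [Fin.sum_univ_eq_sum_range
      (fun m => (if (i : ℕ) = m then k else if (i : ℕ) = m + 1 then 1 else 0) * f m j),
    Finset.sum_congr rfl fun m _ => split m, Finset.sum_add_distrib, Finset.sum_ite_eq,
    if_pos (Finset.mem_range.mpr i.isLt), Finset.sum_range_ite_eq_add_one i.isLt]

theorem of_mul_jordanBlock_transpose_apply {m : Type*} (M : ℕ) (l : ℂ) (f : m → ℕ → ℂ)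
    (i : m) (j : Fin M) :
    ((of fun i (j : Fin M) => f i j) * (jordanBlock M l)ᵀ) i j =
      l * f i j + if (j : ℕ) = 0 then 0 else f i (j - 1) := by
  rw [← transpose_apply (_ * _), transpose_mul, transpose_transpose]
  exact jordanBlock_mul_of_apply M l (fun j i => f i j) j i

/-- With 0-based indices, `sylvesterCoeff (k - l) a b` is the paper's `g_{a+1, b+1}`. -/
noncomputable def sylvesterCoeff (d : ℂ) (a b : ℕ) : ℂ :=
  (a + b).choose a * (-1) ^ a / d ^ (a + b + 1)

theorem mul_sylvesterCoeff_zero_zero {d : ℂ} (hd : d ≠ 0) : d * sylvesterCoeff d 0 0 = 1 := by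
  simp [sylvesterCoeff, hd]

theorem mul_sylvesterCoeff_zero_succ {d : ℂ} (hd : d ≠ 0) (b : ℕ) :
    d * sylvesterCoeff d 0 (b + 1) = sylvesterCoeff d 0 b := by
  simp only [sylvesterCoeff, zero_add, Nat.choose_zero_right, Nat.cast_one, pow_zero, mul_one]
  field_simp
  ring

theorem mul_sylvesterCoeff_succ_zero {d : ℂ} (hd : d ≠ 0) (a : ℕ) :
    d * sylvesterCoeff d (a + 1) 0 + sylvesterCoeff d a 0 = 0 := by
  simp only [sylvesterCoeff, add_zero, Nat.choose_self, Nat.cast_one, one_mul]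
  field_simp
  ring

theorem mul_sylvesterCoeff_succ_succ {d : ℂ} (hd : d ≠ 0) (a b : ℕ) :
    d * sylvesterCoeff d (a + 1) (b + 1) + sylvesterCoeff d a (b + 1) =
      sylvesterCoeff d (a + 1) b := by
  unfold sylvesterCoeff
  rw [show a + 1 + (b + 1) = a + b + 1 + 1 by ring, Nat.choose_succ_succ,
    show a + (b + 1) = a + b + 1 by ring, show a + 1 + b = a + b + 1 by ring]
  push_cast
  field_simp
  ring

theorem sylvesterCoeff_shift_relation {d : ℂ} (hd : d ≠ 0) (a b : ℕ) :
    d * sylvesterCoeff d a b + (if a = 0 then 0 else sylvesterCoeff d (a - 1) b)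
      - (if b = 0 then 0 else sylvesterCoeff d a (b - 1))
      = (if a = 0 then 1 else 0) * (if b = 0 then 1 else 0) := by
  rcases a with _ | a <;> rcases b with _ | b <;>
    simp only [↓reduceIte, Nat.add_one_ne_zero, add_tsub_cancel_right, add_zero, sub_zero,
      mul_one, mul_zero]
  · exact mul_sylvesterCoeff_zero_zero hd
  · rw [mul_sylvesterCoeff_zero_succ hd, sub_self]
  · exact mul_sylvesterCoeff_succ_zero hd a
  · rw [mul_sylvesterCoeff_succ_succ hd, sub_self]

theorem jordan_sylvester_difference_general (N M : ℕ)
    (k l : ℂ) (hkl : k ≠ l)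
    (G : Matrix (Fin N) (Fin M) ℂ)
    (hG : G = Matrix.of fun (i : Fin N) (j : Fin M) =>
      (Nat.choose ((i : ℕ) + (j : ℕ)) (i : ℕ) : ℂ) * (-1 : ℂ) ^ (i : ℕ) /
        (k - l) ^ ((i : ℕ) + (j : ℕ) + 1))
    (e1N : Fin N → ℂ) (he1N : e1N = fun (i : Fin N) => if (i : ℕ) = 0 then (1 : ℂ) else 0)
    (e1M : Fin M → ℂ) (he1M : e1M = fun (i : Fin M) => if (i : ℕ) = 0 then (1 : ℂ) else 0) :
    jordanBlock N k * G - G * (jordanBlock M l)ᵀ = Matrix.vecMulVec e1N e1M := by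
  subst hG he1N he1M
  change jordanBlock N k * (of fun (i : Fin N) (j : Fin M) => sylvesterCoeff (k - l) i j)
    - (of fun (i : Fin N) (j : Fin M) => sylvesterCoeff (k - l) i j) * (jordanBlock M l)ᵀ = _
  ext i j
  rw [Matrix.sub_apply,
    jordanBlock_mul_of_apply N k (fun a (j : Fin M) => sylvesterCoeff (k - l) a j),
    of_mul_jordanBlock_transpose_apply M l (fun (i : Fin N) b => sylvesterCoeff (k - l) i b),
    vecMulVec_apply, ← sylvesterCoeff_shift_relation (sub_ne_zero.mpr hkl)]
  ring

/-- the matrix `G` with (1-based) entries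
`g_{ij} = C(i+j−2, i−1)·(−1)^{i−1}/(k−l)^{i+j−1}` solves the Sylvester equation
`K·G − G·L = e₁·e₁ᵀ` with `K = J^{[N]}[k]`, `L = (J^{[M]}[l])ᵀ`. -/
theorem jordan_sylvester_difference (N M : ℕ) (hN : 1 ≤ N) (hM : 1 ≤ M)
    (k l : ℂ) (hkl : k ≠ l)
    (G : Matrix (Fin N) (Fin M) ℂ)
    (hG : G = Matrix.of fun (i : Fin N) (j : Fin M) =>
      (Nat.choose ((i : ℕ) + (j : ℕ)) (i : ℕ) : ℂ) * (-1 : ℂ) ^ (i : ℕ) /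
        (k - l) ^ ((i : ℕ) + (j : ℕ) + 1))
    (e1N : Fin N → ℂ) (he1N : e1N = fun (i : Fin N) => if (i : ℕ) = 0 then (1 : ℂ) else 0)
    (e1M : Fin M → ℂ) (he1M : e1M = fun (i : Fin M) => if (i : ℕ) = 0 then (1 : ℂ) else 0) :
    jordanBlock N k * G - G * (jordanBlock M l)ᵀ = Matrix.vecMulVec e1N e1M :=
  jordan_sylvester_difference_general N M k l hkl G hG e1N he1N e1M he1M
end

section
/- Let N, M ≥ 1 and let k, l ∈ ℂ with k ≠ l. Let K = J^{[N]}[k], L = (J^{[M]}[l])ᵀ, and let G be the N×M matrix with entries g_{ij} = C(i+j−2, i−1)·(−1)^{i−1}/(k−l)^{i+j−1}. Let R be any N×N lower-triangular Toeplitz matrix (R_{ij} = a_{i−j} for i ≥ j and R_{ij} = 0 for i < j, for some a₀, …, a_{N−1} ∈ ℂ) and let S be any M×M lower-triangular Toeplitz matrix. Then M̂ = R·G·Sᵀ satisfies the Sylvester equation K·M̂ − M̂·L = r·sᵀ, where r = R·e₁⁽ᴺ⁾ and s = S·e₁⁽ᴹ⁾. -/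
open Matrix

/-- The `N×N` lower-triangular Toeplitz matrix with entries `a_{i−j}` for `i ≥ j`. -/
def lowerToeplitz (N : ℕ) (a : ℕ → ℂ) : Matrix (Fin N) (Fin N) ℂ :=
  Matrix.of fun i j => if (j : ℕ) ≤ (i : ℕ) then a ((i : ℕ) - (j : ℕ)) else 0

/-!
The Jordan block `K` commutes with every lower-triangular Toeplitz matrix `R`, and likewise
`L = (J[l])ᵀ` with `Sᵀ`; hence `K (R G Sᵀ) - (R G Sᵀ) L = R (K G - G L) Sᵀ`, and the rank-one
`K G - G L = e₁ e₁ᵀ` is carried to `(R e₁) (S e₁)ᵀ`. With 0-based indices, `g_{ij}` is the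
coefficient of `uⁱ vʲ` in `1 / (k - l + u - v)`, and `K G - G L = e₁ e₁ᵀ` is the identity
`(k - l + u - v) · Σ g_{ij} uⁱ vʲ = 1` read coefficientwise.
-/

theorem Fin.sum_ite_val_eq {M : Type*} [AddCommMonoid M] {n : ℕ} (m : ℕ) (f : Fin n → M) :
    ∑ x : Fin n, (if (x : ℕ) = m then f x else 0) = if h : m < n then f ⟨m, h⟩ else 0 := by
  split_ifs with h
  · simpa [Fin.ext_iff] using Finset.sum_ite_eq' Finset.univ (⟨m, h⟩ : Fin n) f
  · exact Finset.sum_eq_zero fun x _ => if_neg (by omega)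

theorem Matrix.Commute.transpose {n α : Type*} [Fintype n] [CommSemiring α]
    {A B : Matrix n n α} (h : Commute A B) : Commute Aᵀ Bᵀ := by
  rw [Commute, SemiconjBy, ← transpose_mul, ← transpose_mul, h.eq]

theorem sylvester_sandwich_of_commute {m n α : Type*} [Fintype m] [Fintype n] [Ring α]
    {K R : Matrix m m α} {T L : Matrix n n α} (G : Matrix m n α)
    (hKR : Commute K R) (hTL : Commute T L) :
    K * (R * G * T) - R * G * T * L = R * (K * G - G * L) * T := by
  rw [Matrix.mul_sub, Matrix.sub_mul, ← Matrix.mul_assoc K, ← Matrix.mul_assoc K, hKR.eq,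
    Matrix.mul_assoc (R * G) T, hTL.eq]
  simp only [Matrix.mul_assoc]

section JordanBlock

variable {ι : Type*} {n : ℕ} (c : ℂ)

lemma jordanBlock_apply (i j : Fin n) :
    jordanBlock n c i j = (if i = j then c else 0) + if (i : ℕ) = j + 1 then 1 else 0 := by
  simp only [jordanBlock, of_apply, Fin.ext_iff]
  split_ifs <;> first | omega | simp

lemma jordanBlock_mul_apply (A : Matrix (Fin n) ι ℂ) (i : Fin n) (j : ι) :
    (jordanBlock n c * A) i j =
      c * A i j + if h : 0 < (i : ℕ) then A ⟨i - 1, by omega⟩ j else 0 := by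
  simp only [mul_apply, jordanBlock_apply, add_mul, ite_mul, one_mul, zero_mul,
    Finset.sum_add_distrib, Finset.sum_ite_eq, Finset.mem_univ, if_true]
  congr 1
  have hiff : ∀ x : Fin n, (i : ℕ) = x + 1 ↔ 0 < (i : ℕ) ∧ (x : ℕ) = i - 1 := fun x => by omega
  by_cases hi : 0 < (i : ℕ)
  · rw [dif_pos hi]
    simp only [hiff, hi, true_and, Fin.sum_ite_val_eq, dif_pos (by omega : (i : ℕ) - 1 < n)]
  · simp [hiff, hi]

lemma mul_jordanBlock_apply (A : Matrix ι (Fin n) ℂ) (i : ι) (j : Fin n) :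
    (A * jordanBlock n c) i j =
      c * A i j + if h : (j : ℕ) + 1 < n then A i ⟨j + 1, h⟩ else 0 := by
  simp only [mul_apply, jordanBlock_apply, mul_add, mul_ite, mul_one, mul_zero,
    Finset.sum_add_distrib, Finset.sum_ite_eq', Finset.mem_univ, if_true, Fin.sum_ite_val_eq,
    mul_comm]

lemma mul_transpose_jordanBlock_apply (A : Matrix ι (Fin n) ℂ) (i : ι) (j : Fin n) :
    (A * (jordanBlock n c)ᵀ) i j =
      c * A i j + if h : 0 < (j : ℕ) then A i ⟨j - 1, by omega⟩ else 0 := by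
  rw [← transpose_apply (A * _), transpose_mul, transpose_transpose, jordanBlock_mul_apply]
  rfl

lemma jordanBlock_commute_lowerToeplitz (a : ℕ → ℂ) :
    Commute (jordanBlock n c) (lowerToeplitz n a) := by
  ext i j
  rw [jordanBlock_mul_apply, mul_jordanBlock_apply]
  congr 1
  simp only [lowerToeplitz, of_apply]
  split_ifs <;> first | omega | rfl | (congr 1; omega)

end JordanBlock

noncomputable def invSubCoeff (d : ℂ) (p q : ℕ) : ℂ :=
  (p + q).choose p * (-1) ^ p / d ^ (p + q + 1)

lemma invSubCoeff_recurrence {d : ℂ} (hd : d ≠ 0) (p q : ℕ) :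
    d * invSubCoeff d p q + (if 0 < p then invSubCoeff d (p - 1) q else 0)
      - (if 0 < q then invSubCoeff d p (q - 1) else 0) = if p = 0 ∧ q = 0 then 1 else 0 := by
  rcases p with _ | p <;> rcases q with _ | q <;> simp only [invSubCoeff] <;> simp
  · exact mul_inv_cancel₀ hd
  · field_simp; ring
  · field_simp; ring
  · have pascal : (p + 1 + (q + 1)).choose (p + 1) =
        (p + (q + 1)).choose p + (p + 1 + q).choose (p + 1) := by
      rw [show p + 1 + (q + 1) = p + (q + 1) + 1 by ring, Nat.choose_succ_succ,
        show p + 1 + q = p + (q + 1) by ring]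
    rw [pascal]
    push_cast
    field_simp
    ring

lemma jordanBlock_sylvester_invSubCoeff {N M : ℕ} {k l : ℂ} (hkl : k ≠ l) :
    jordanBlock N k * of (fun (i : Fin N) (j : Fin M) => invSubCoeff (k - l) i j)
      - of (fun (i : Fin N) (j : Fin M) => invSubCoeff (k - l) i j) * (jordanBlock M l)ᵀ =
    vecMulVec (fun i : Fin N => if (i : ℕ) = 0 then 1 else 0)
      (fun j : Fin M => if (j : ℕ) = 0 then 1 else 0) := by
  ext i j
  simp only [Matrix.sub_apply, jordanBlock_mul_apply, mul_transpose_jordanBlock_apply, of_apply,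
    dite_eq_ite, vecMulVec_apply, ite_mul, one_mul, zero_mul, ← ite_and]
  linear_combination invSubCoeff_recurrence (sub_ne_zero.mpr hkl) i j

theorem jordan_sylvester_dressed_general (N M : ℕ)
    (k l : ℂ) (hkl : k ≠ l)
    (G : Matrix (Fin N) (Fin M) ℂ)
    (hG : G = Matrix.of fun (i : Fin N) (j : Fin M) =>
      (Nat.choose ((i : ℕ) + (j : ℕ)) (i : ℕ) : ℂ) * (-1 : ℂ) ^ (i : ℕ) /
        (k - l) ^ ((i : ℕ) + (j : ℕ) + 1))
    (a b : ℕ → ℂ)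
    (R : Matrix (Fin N) (Fin N) ℂ) (hR : R = lowerToeplitz N a)
    (S : Matrix (Fin M) (Fin M) ℂ) (hS : S = lowerToeplitz M b)
    (e1N : Fin N → ℂ) (he1N : e1N = fun (i : Fin N) => if (i : ℕ) = 0 then (1 : ℂ) else 0)
    (e1M : Fin M → ℂ) (he1M : e1M = fun (i : Fin M) => if (i : ℕ) = 0 then (1 : ℂ) else 0)
    (Mh : Matrix (Fin N) (Fin M) ℂ) (hMh : Mh = R * G * Sᵀ)
    (r : Fin N → ℂ) (hr : r = R *ᵥ e1N)
    (s : Fin M → ℂ) (hs : s = S *ᵥ e1M) :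
    jordanBlock N k * Mh - Mh * (jordanBlock M l)ᵀ = Matrix.vecMulVec r s := by
  have hG' : G = of fun (i : Fin N) (j : Fin M) => invSubCoeff (k - l) i j := hG
  subst hMh hr hs he1N he1M hR hS hG'
  rw [sylvester_sandwich_of_commute _ (jordanBlock_commute_lowerToeplitz k a)
      (jordanBlock_commute_lowerToeplitz l b).symm.transpose,
    jordanBlock_sylvester_invSubCoeff hkl, mul_vecMulVec, vecMulVec_mul, vecMul_transpose]

/-- dressing the solution `G` of the Jordan-block Sylvester equation with
lower-triangular Toeplitz matrices `R, S` gives `M̂ = R·G·Sᵀ` with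
`K·M̂ − M̂·L = r·sᵀ`, where `r = R·e₁`, `s = S·e₁`. -/
theorem jordan_sylvester_dressed (N M : ℕ) (hN : 1 ≤ N) (hM : 1 ≤ M)
    (k l : ℂ) (hkl : k ≠ l)
    (G : Matrix (Fin N) (Fin M) ℂ)
    (hG : G = Matrix.of fun (i : Fin N) (j : Fin M) =>
      (Nat.choose ((i : ℕ) + (j : ℕ)) (i : ℕ) : ℂ) * (-1 : ℂ) ^ (i : ℕ) /
        (k - l) ^ ((i : ℕ) + (j : ℕ) + 1))
    (a b : ℕ → ℂ)
    (R : Matrix (Fin N) (Fin N) ℂ) (hR : R = lowerToeplitz N a)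
    (S : Matrix (Fin M) (Fin M) ℂ) (hS : S = lowerToeplitz M b)
    (e1N : Fin N → ℂ) (he1N : e1N = fun (i : Fin N) => if (i : ℕ) = 0 then (1 : ℂ) else 0)
    (e1M : Fin M → ℂ) (he1M : e1M = fun (i : Fin M) => if (i : ℕ) = 0 then (1 : ℂ) else 0)
    (Mh : Matrix (Fin N) (Fin M) ℂ) (hMh : Mh = R * G * Sᵀ)
    (r : Fin N → ℂ) (hr : r = R *ᵥ e1N)
    (s : Fin M → ℂ) (hs : s = S *ᵥ e1M) :
    jordanBlock N k * Mh - Mh * (jordanBlock M l)ᵀ = Matrix.vecMulVec r s :=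
  jordan_sylvester_dressed_general N M k l hkl G hG a b R hR S hS e1N he1N e1M he1M Mh hMh r hr s hs
end

section
/- Let N, M ≥ 1 and let k, l ∈ ℂ with k + l ≠ 0. Let K = J^{[N]}[k] be the N×N lower-triangular Jordan block and let L = (J^{[M]}[l])ᵀ. Let G be the N×M matrix with entries g_{ij} = C(i+j−2, i−1)·(−1)^{i+j}/(k+l)^{i+j−1}, where C(n, m) is the binomial coefficient. Then K·G + G·L = e₁⁽ᴺ⁾·(e₁⁽ᴹ⁾)ᵀ. -/
open Matrix

lemma jb_sum {N : ℕ} (i : Fin N) (k : ℂ) (f : Fin N → ℂ) :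
    (∑ m : Fin N, (if (i : ℕ) = (m : ℕ) then k else if (i : ℕ) = (m : ℕ) + 1 then (1:ℂ) else 0) * f m)
      = k * f i + (if h : (i : ℕ) ≠ 0 then
          f ⟨(i : ℕ) - 1, Nat.lt_of_le_of_lt (Nat.sub_le _ _) i.isLt⟩ else 0) := by
  have hsplit : ∀ m : Fin N,
      (if (i : ℕ) = (m : ℕ) then k else if (i : ℕ) = (m : ℕ) + 1 then (1:ℂ) else 0) * f m
        = (if m = i then k * f m else 0) + (if (i : ℕ) = (m : ℕ) + 1 then f m else 0) := by
    intro m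
    by_cases h1 : (i : ℕ) = (m : ℕ)
    · have hm : m = i := Fin.ext h1.symm
      have h2 : ¬ (i : ℕ) = (m : ℕ) + 1 := by omega
      simp [hm, h2]
    · have hm : ¬ m = i := fun h => h1 (by rw [h])
      by_cases h2 : (i : ℕ) = (m : ℕ) + 1 <;> simp [h1, h2, hm]
  simp only [hsplit]
  rw [Finset.sum_add_distrib, Finset.sum_ite_eq' Finset.univ i (fun m => k * f m)]
  simp only [Finset.mem_univ, if_true]
  congr 1
  by_cases hi : (i : ℕ) = 0
  · rw [dif_neg (not_not.mpr hi)]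
    apply Finset.sum_eq_zero
    intro m _
    rw [if_neg (by omega)]
  · rw [dif_pos hi]
    have hlt : (i : ℕ) - 1 < N := Nat.lt_of_le_of_lt (Nat.sub_le _ _) i.isLt
    rw [Finset.sum_eq_single (⟨(i : ℕ) - 1, hlt⟩ : Fin N)]
    · rw [if_pos (by simp; omega)]
    · intro b _ hb
      rw [if_neg]
      intro hc
      exact hb (Fin.ext (by simp; omega))
    · intro h; exact absurd (Finset.mem_univ _) h

lemma jb_sum' {N : ℕ} (i : Fin N) (k : ℂ) (f : Fin N → ℂ) :
    (∑ m : Fin N, f m * (if (i : ℕ) = (m : ℕ) then k else if (i : ℕ) = (m : ℕ) + 1 then (1:ℂ) else 0))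
      = k * f i + (if h : (i : ℕ) ≠ 0 then
          f ⟨(i : ℕ) - 1, Nat.lt_of_le_of_lt (Nat.sub_le _ _) i.isLt⟩ else 0) := by
  rw [show (∑ m : Fin N, f m * (if (i : ℕ) = (m : ℕ) then k else
      if (i : ℕ) = (m : ℕ) + 1 then (1:ℂ) else 0))
    = ∑ m : Fin N, (if (i : ℕ) = (m : ℕ) then k else
      if (i : ℕ) = (m : ℕ) + 1 then (1:ℂ) else 0) * f m from
    Finset.sum_congr rfl (fun m _ => mul_comm _ _)]
  exact jb_sum i k f

/-- the matrix `G` with (1-based) entries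
`g_{ij} = C(i+j−2, i−1)·(−1)^{i+j}/(k+l)^{i+j−1}` solves the Sylvester equation
`K·G + G·L = e₁·e₁ᵀ` with `K = J^{[N]}[k]`, `L = (J^{[M]}[l])ᵀ`. -/
theorem jordan_sylvester_sum (N M : ℕ) (hN : 1 ≤ N) (hM : 1 ≤ M)
    (k l : ℂ) (hkl : k + l ≠ 0)
    (G : Matrix (Fin N) (Fin M) ℂ)
    (hG : G = Matrix.of fun (i : Fin N) (j : Fin M) =>
      (Nat.choose ((i : ℕ) + (j : ℕ)) (i : ℕ) : ℂ) * (-1 : ℂ) ^ ((i : ℕ) + (j : ℕ)) /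
        (k + l) ^ ((i : ℕ) + (j : ℕ) + 1))
    (e1N : Fin N → ℂ) (he1N : e1N = fun (i : Fin N) => if (i : ℕ) = 0 then (1 : ℂ) else 0)
    (e1M : Fin M → ℂ) (he1M : e1M = fun (i : Fin M) => if (i : ℕ) = 0 then (1 : ℂ) else 0) :
    jordanBlock N k * G + G * (jordanBlock M l)ᵀ = Matrix.vecMulVec e1N e1M := by
  subst hG he1N he1M
  ext i j
  simp only [Matrix.add_apply, Matrix.mul_apply, Matrix.vecMulVec_apply,
    Matrix.transpose_apply, jordanBlock, Matrix.of_apply]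
  rw [jb_sum i k (fun m => (Nat.choose ((m : ℕ) + (j : ℕ)) (m : ℕ) : ℂ) *
      (-1 : ℂ) ^ ((m : ℕ) + (j : ℕ)) / (k + l) ^ ((m : ℕ) + (j : ℕ) + 1)),
    jb_sum' j l (fun m => (Nat.choose ((i : ℕ) + (m : ℕ)) (i : ℕ) : ℂ) *
      (-1 : ℂ) ^ ((i : ℕ) + (m : ℕ)) / (k + l) ^ ((i : ℕ) + (m : ℕ) + 1))]
  rcases Nat.eq_zero_or_pos (i : ℕ) with hi | hi <;>
    rcases Nat.eq_zero_or_pos (j : ℕ) with hj | hj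
  · simp only [hi, hj]
    norm_num
    field_simp
  · obtain ⟨b, hb⟩ : ∃ b, (j : ℕ) = b + 1 := ⟨(j : ℕ) - 1, by omega⟩
    simp only [hi, hb]
    norm_num
    field_simp
    ring
  · obtain ⟨a, ha⟩ : ∃ a, (i : ℕ) = a + 1 := ⟨(i : ℕ) - 1, by omega⟩
    simp only [hj, ha]
    norm_num
    field_simp
    ring
  · obtain ⟨a, ha⟩ : ∃ a, (i : ℕ) = a + 1 := ⟨(i : ℕ) - 1, by omega⟩
    obtain ⟨b, hb⟩ : ∃ b, (j : ℕ) = b + 1 := ⟨(j : ℕ) - 1, by omega⟩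
    simp only [ha, hb]
    norm_num
    have key : ((a + b + 2).choose (a + 1) : ℂ)
        = ((a + b + 1).choose a : ℂ) + ((a + b + 1).choose (a + 1) : ℂ) := by
      exact_mod_cast Nat.choose_succ_succ (a + b + 1) a
    rw [show a + 1 + (b + 1) = a + b + 2 from by ring,
        show a + (b + 1) = a + b + 1 from by ring,
        show a + 1 + b = a + b + 1 from by ring] at *
    rw [key]
    field_simp
    ring
end
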